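/- The subalgebra I_L of U_q(sl_2) generated by E, FK, K and Λ is a right coideal: Δ(x) ∈ I_L ⊗ U_q(sl_2) for each generator x ∈ {E, FK, K, Λ}. -/
import Mathlib


open TensorProduct

variable {𝕜 A : Type*} [Field 𝕜] [Ring A] [Algebra 𝕜 A]

/-- The Casimir element `Λ = (q − q⁻¹)² E F + q⁻¹ K + q K⁻¹` of `U_q(sl₂)`. -/
def casimir (q : 𝕜) (E F K K' : A) : A :=
  (q - q⁻¹) ^ 2 • (E * F) + q⁻¹ • K + q • K'

/-- The subalgebra `I_L` of `U_q(sl₂)` generated by `E`, `FK`, `K` and `Λ` is a right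
coideal: `Δ(x) ∈ I_L ⊗ U_q(sl₂)` for each generator `x`. Membership in `I_L ⊗ U_q(sl₂)`
is expressed as membership in the range of the canonical map
`I_L ⊗ U_q(sl₂) → U_q(sl₂) ⊗ U_q(sl₂)`. -/
theorem IL_right_coideal (q : 𝕜) (hq : q ≠ 0) (hroot : ∀ n : ℕ, 0 < n → q ^ n ≠ 1)
    (E F K K' : A)
    (hKK' : K * K' = 1) (hK'K : K' * K = 1)
    (hKE : K * E = q ^ 2 • (E * K))
    (hKF : K * F = (q ^ 2)⁻¹ • (F * K))
    (hEF : E * F - F * E = (q - q⁻¹)⁻¹ • (K - K'))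
    (Δ : A →ₐ[𝕜] A ⊗[𝕜] A)
    (hΔE : Δ E = E ⊗ₜ 1 + K ⊗ₜ E)
    (hΔF : Δ F = F ⊗ₜ K' + 1 ⊗ₜ F)
    (hΔK : Δ K = K ⊗ₜ K)
    (hΔK' : Δ K' = K' ⊗ₜ K') :
    let IL : Subalgebra 𝕜 A :=
      Algebra.adjoin 𝕜 ({E, F * K, K, casimir q E F K K'} : Set A)
    let S : Subalgebra 𝕜 (A ⊗[𝕜] A) :=
      (Algebra.TensorProduct.map IL.val (AlgHom.id 𝕜 A)).range
    Δ E ∈ S ∧ Δ (F * K) ∈ S ∧ Δ K ∈ S ∧ Δ (casimir q E F K K') ∈ S := by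
  intro IL S
  have hmem : ∀ a b : A, a ∈ IL → a ⊗ₜ[𝕜] b ∈ S := by
    intro a b ha
    exact ⟨(⟨a, ha⟩ : IL) ⊗ₜ b, by simp⟩
  have hE : E ∈ IL := Algebra.subset_adjoin (by simp)
  have hFK : F * K ∈ IL := Algebra.subset_adjoin (by simp)
  have hK : K ∈ IL := Algebra.subset_adjoin (by simp)
  have hL : casimir q E F K K' ∈ IL := Algebra.subset_adjoin (by simp)
  refine ⟨?_, ?_, ?_, ?_⟩
  · rw [hΔE]; exact S.add_mem (hmem _ _ hE) (hmem _ _ hK)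
  · rw [map_mul, hΔF, hΔK, add_mul, Algebra.TensorProduct.tmul_mul_tmul,
      Algebra.TensorProduct.tmul_mul_tmul, one_mul]
    exact S.add_mem (hmem _ _ hFK) (hmem _ _ hK)
  · rw [hΔK]; exact hmem _ _ hK
  · have key : Δ (casimir q E F K K') =
        casimir q E F K K' ⊗ₜ K' + K ⊗ₜ casimir q E F K K'
          - (q + q⁻¹) • (K ⊗ₜ K') + (q - q⁻¹) ^ 2 • (E ⊗ₜ F)
          + ((q - q⁻¹) ^ 2 * (q ^ 2)⁻¹) • ((F * K) ⊗ₜ (E * K')) := by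
      simp only [casimir, map_add, map_smul, map_mul, hΔE, hΔF, hΔK, hΔK', add_mul, mul_add,
        Algebra.TensorProduct.tmul_mul_tmul, one_mul, mul_one, hKF,
        TensorProduct.add_tmul, TensorProduct.tmul_add, ← TensorProduct.smul_tmul',
        TensorProduct.tmul_smul, smul_smul]
      module
    rw [key]
    refine S.add_mem (S.add_mem (S.sub_mem (S.add_mem (hmem _ _ hL) (hmem _ _ hK))
      (S.smul_mem (hmem _ _ hK) _)) (S.smul_mem (hmem _ _ hE) _))
      (S.smul_mem (hmem _ _ hFK) _)
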